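/- arXiv:2407.17004 — 7 statements merged into one kernel-verified Lean document; each statement's English description precedes it below -/
import Mathlib

section
/- Let G be a partially ordered abelian group with order unit u. Then (G, u) has Property (D) if and only if the set Σ of all supernatural numbers N with N ∣ u has a maximum element with respect to divisibility, i.e., there exists N ∈ Σ such that M ∣ N for every M ∈ Σ. -/
/-- A supernatural number: a function from the primes to `ℕ∞ = ℕ ∪ {∞}`. -/
def Supernatural : Type := Nat.Primes → ℕ∞

/-- A natural number `n ≥ 1` divides a supernatural number `N` if for every prime `p`
the `p`-adic valuation of `n` is at most `N(p)`. -/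
def NatDvdSn (n : ℕ) (N : Supernatural) : Prop :=
  ∀ p : Nat.Primes, ((n.factorization (p : ℕ) : ℕ) : ℕ∞) ≤ N p

/-- Divisibility of supernatural numbers: `M ∣ N` iff `M(p) ≤ N(p)` for all primes. -/
def SnDvd (M N : Supernatural) : Prop := ∀ p : Nat.Primes, M p ≤ N p

/-- `n ∣ u` in a partially ordered abelian group: there is `x ≥ 0` with `n • x = u`. -/
def NatDvdU {G : Type*} [AddCommGroup G] [PartialOrder G] [IsOrderedAddMonoid G] (n : ℕ) (u : G) : Prop :=
  ∃ x : G, 0 ≤ x ∧ n • x = u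

/-- `N ∣ u` for a supernatural number `N`: every natural number `n ≥ 1` dividing `N`
divides `u`. -/
def SnDvdU {G : Type*} [AddCommGroup G] [PartialOrder G] [IsOrderedAddMonoid G] (N : Supernatural) (u : G) : Prop :=
  ∀ n : ℕ, 1 ≤ n → NatDvdSn n N → NatDvdU n u

section Aux

variable {G : Type*} [AddCommGroup G] [PartialOrder G] [IsOrderedAddMonoid G]

/-- Divisibility of natural divisors transfers along `NatDvdU`. -/
lemma aux_natDvdU_of_dvd {d m : ℕ} {u : G} (h : d ∣ m) (hm : NatDvdU m u) :
    NatDvdU d u := by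
  obtain ⟨e, rfl⟩ := h
  obtain ⟨x, hx, hxu⟩ := hm
  exact ⟨e • x, nsmul_nonneg hx e, by rw [← mul_nsmul, mul_comm, hxu]⟩

lemma aux_enat_le_of_forall {a b : ℕ∞} (h : ∀ k : ℕ, (k : ℕ∞) ≤ a → (k : ℕ∞) ≤ b) :
    a ≤ b := by
  induction a using ENat.recTopCoe with
  | top =>
    have hb : ∀ k : ℕ, (k : ℕ∞) ≤ b := fun k => h k le_top
    have : b = ⊤ := by
      induction b using ENat.recTopCoe with
      | top => rfl
      | coe k => exact absurd (hb (k + 1)) (by exact_mod_cast by omega)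
    exact le_of_eq this.symm
  | coe k => exact h k le_rfl

end Aux

/-- For a partially ordered abelian group `G` with order unit `u`,
`(G, u)` has Property (D) iff the set `Σ` of supernatural numbers dividing `u`
has a maximum element with respect to divisibility. -/
theorem propertyD_iff_exists_max_supernatural_divisor
    {G : Type*} [AddCommGroup G] [PartialOrder G] [IsOrderedAddMonoid G]
    (u : G) (hu_pos : 0 ≤ u)
    (hu_unit : ∀ g : G, ∃ n : ℕ, -(n • u) ≤ g ∧ g ≤ n • u) :
    (∀ m n : ℕ, 1 ≤ m → 1 ≤ n → Nat.Coprime m n →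
        NatDvdU m u → NatDvdU n u → NatDvdU (m * n) u) ↔
      ∃ N ∈ {N : Supernatural | SnDvdU N u},
        ∀ M ∈ {N : Supernatural | SnDvdU N u}, SnDvd M N := by
  constructor
  · -- Property (D) implies existence of a maximum supernatural divisor.
    intro hD
    -- The candidate maximum: `N p` is the sup of all `k` with `p^k ∣ u`.
    set N : Supernatural :=
      fun p => ⨆ s : {k : ℕ // NatDvdU ((p : ℕ) ^ k) u}, ((s : ℕ) : ℕ∞) with hNdef
    -- Any `k` with `(k : ℕ∞) ≤ N p` satisfies `p^k ∣ u`.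
    have hpow : ∀ (p : Nat.Primes) (k : ℕ), ((k : ℕ) : ℕ∞) ≤ N p →
        NatDvdU ((p : ℕ) ^ k) u := by
      intro p k hk
      rcases Nat.eq_zero_or_pos k with rfl | hkpos
      · exact ⟨u, hu_pos, by simp⟩
      · have hlt : (((k - 1 : ℕ) : ℕ∞)) < N p := by
          refine lt_of_lt_of_le ?_ hk
          exact_mod_cast Nat.sub_lt hkpos one_pos
        rw [hNdef] at hlt
        rw [lt_iSup_iff] at hlt
        obtain ⟨⟨s, hs⟩, hslt⟩ := hlt
        have hks : k ≤ s := by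
          have : (k - 1 : ℕ) < s := by exact_mod_cast hslt
          omega
        exact aux_natDvdU_of_dvd (pow_dvd_pow _ hks) hs
    refine ⟨N, ?_, ?_⟩
    · -- `N ∣ u`: strong induction on `n` using Property (D).
      intro n
      induction n using Nat.strong_induction_on with
      | _ n ih =>
        intro hn1 hnN
        rcases eq_or_lt_of_le hn1 with h1 | h1
        · exact ⟨u, hu_pos, by rw [← h1]; simp⟩
        · -- `n ≥ 2`; split off the largest power of its least prime factor.
          have hn0 : n ≠ 0 := by omega
          set p : ℕ := n.minFac with hpdef
          have hp : p.Prime := Nat.minFac_prime (by omega)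
          set k : ℕ := n.factorization p with hkdef
          set m : ℕ := n / p ^ k with hmdef
          have hmul : p ^ k * m = n := Nat.ordProj_mul_ordCompl_eq_self n p
          have hkpos : 1 ≤ k := by
            rw [hkdef]
            exact (Nat.Prime.factorization_pos_of_dvd hp hn0 (Nat.minFac_dvd n))
          have hppow : (2 : ℕ) ≤ p ^ k :=
            le_trans hp.two_le (Nat.le_self_pow (by omega) p)
          have hm1 : 1 ≤ m := by
            rcases Nat.eq_zero_or_pos m with h0 | h
            · rw [h0, mul_zero] at hmul; omega
            · exact h
          have hmlt : m < n := by
            rw [hmdef]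
            exact Nat.div_lt_self (by omega) (by omega)
          have hmdvd : m ∣ n := ⟨p ^ k, by rw [← hmul]; ring⟩
          -- `p^k ∣ u` from the definition of `N`.
          have hpk : NatDvdU (p ^ k) u := by
            have := hnN ⟨p, hp⟩
            exact hpow ⟨p, hp⟩ k this
          -- `m ∣ u` by induction.
          have hmN : NatDvdSn m N := by
            intro q
            refine le_trans ?_ (hnN q)
            exact_mod_cast (Nat.factorization_le_iff_dvd (by omega) hn0).2 hmdvd (q : ℕ)
          have hmu : NatDvdU m u := ih m hmlt hm1 hmN
          have hcop : Nat.Coprime (p ^ k) m :=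
            Nat.Coprime.pow_left _ (Nat.coprime_ordCompl hp hn0)
          have := hD (p ^ k) m (by omega) hm1 hcop hpk hmu
          rwa [hmul] at this
    · -- Maximality of `N`.
      intro M hM p
      refine aux_enat_le_of_forall ?_
      intro k hk
      -- `p^k ∣ M`, hence `p^k ∣ u`, hence `k ≤ N p`.
      have hdvd : NatDvdU ((p : ℕ) ^ k) u := by
        refine hM _ (Nat.one_le_iff_ne_zero.2 (pow_ne_zero k p.2.ne_zero)) ?_
        intro q
        rw [Nat.Prime.factorization_pow p.2]
        by_cases hpq : (p : ℕ) = (q : ℕ)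
        · rw [Finsupp.single_apply, if_pos hpq]
          rcases Subtype.ext hpq with rfl
          exact hk
        · rw [Finsupp.single_apply, if_neg hpq]
          simp
      rw [hNdef]
      exact le_iSup (fun s : {k : ℕ // NatDvdU ((p : ℕ) ^ k) u} => ((s : ℕ) : ℕ∞))
        ⟨k, hdvd⟩
  · -- Existence of a maximum implies Property (D).
    rintro ⟨N, hN, hmax⟩ m n hm1 hn1 hcop hmu hnu
    -- The supernatural number of `m` divides `u`, hence divides `N`; same for `n`.
    have key : ∀ a : ℕ, 1 ≤ a → NatDvdU a u →
        ∀ p : Nat.Primes, ((a.factorization (p : ℕ) : ℕ) : ℕ∞) ≤ N p := by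
      intro a ha hau
      have hA : SnDvdU (fun p => ((a.factorization (p : ℕ) : ℕ) : ℕ∞) : Supernatural) u := by
        intro d hd1 hdA
        have hddvd : d ∣ a := by
          refine (Nat.factorization_le_iff_dvd (by omega) (by omega)).1 ?_
          intro q
          by_cases hq : q.Prime
          · simpa using hdA ⟨q, hq⟩
          · simp [Nat.factorization_eq_zero_of_not_prime _ hq]
        exact aux_natDvdU_of_dvd hddvd hau
      exact hmax _ hA
    have hmN := key m hm1 hmu
    have hnN := key n hn1 hnu
    -- Hence `m * n ∣ N`, so `m * n ∣ u`.
    refine hN (m * n) (Nat.mul_pos hm1 hn1) ?_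
    intro p
    rw [Nat.factorization_mul (by omega) (by omega)]
    have : ¬((p : ℕ) ∣ m ∧ (p : ℕ) ∣ n) := by
      rintro ⟨h1, h2⟩
      exact Nat.Prime.one_lt p.2 |>.ne' (Nat.eq_one_of_dvd_coprimes hcop h1 h2)
    by_cases hpm : (p : ℕ) ∣ m
    · have : n.factorization (p : ℕ) = 0 :=
        Nat.factorization_eq_zero_of_not_dvd (fun h => this ⟨hpm, h⟩)
      simpa [this] using hmN p
    · have : m.factorization (p : ℕ) = 0 :=
        Nat.factorization_eq_zero_of_not_dvd hpm
      simpa [this] using hnN p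
end

section
/- Let G be a partially ordered abelian group with order unit u such that (G, u) has Property (D). Then for every natural number n ≥ 1: n ∣ u if and only if for every prime p, p^(v_p(n)) ∣ u, where v_p(n) denotes the p-adic valuation of n. -/
theorem NatDvdU.of_dvd {G : Type*} [AddCommGroup G] [PartialOrder G] [IsOrderedAddMonoid G] {d n : ℕ} {u : G}
    (hdn : d ∣ n) (h : NatDvdU n u) : NatDvdU d u := by
  obtain ⟨k, rfl⟩ := hdn
  obtain ⟨x, hx, hxu⟩ := h
  exact ⟨k • x, nsmul_nonneg hx k, by rw [← mul_nsmul', hxu]⟩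

/-- If `(G, u)` is a partially ordered abelian group with order unit
having Property (D), then for every `n ≥ 1`: `n ∣ u` iff `p^(v_p(n)) ∣ u` for every
prime `p`. -/
theorem natDvdU_iff_primePow_dvdU
    {G : Type*} [AddCommGroup G] [PartialOrder G] [IsOrderedAddMonoid G]
    (u : G) (hu_pos : 0 ≤ u)
    (hu_unit : ∀ g : G, ∃ n : ℕ, -(n • u) ≤ g ∧ g ≤ n • u)
    (hD : ∀ m n : ℕ, 1 ≤ m → 1 ≤ n → Nat.Coprime m n →
        NatDvdU m u → NatDvdU n u → NatDvdU (m * n) u) :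
    ∀ n : ℕ, 1 ≤ n →
      (NatDvdU n u ↔ ∀ p : ℕ, p.Prime → NatDvdU (p ^ n.factorization p) u) := by
  intro n hn
  constructor
  · intro h p hp
    exact h.of_dvd (Nat.ordProj_dvd n p)
  · induction n using Nat.strong_induction_on with
    | _ n ih =>
      intro h
      rcases eq_or_lt_of_le hn with h1 | h1
      · exact ⟨u, hu_pos, by rw [← h1, one_nsmul]⟩
      · obtain ⟨p, hp, hpn⟩ := Nat.exists_prime_and_dvd (by omega : n ≠ 1)
        have hn0 : n ≠ 0 := by omega
        have hv : 1 ≤ n.factorization p := (Nat.Prime.dvd_iff_one_le_factorization hp hn0).mp hpn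
        set m := ordCompl[p] n with hm
        have hmn : ordProj[p] n * m = n := Nat.ordProj_mul_ordCompl_eq_self n p
        have hm1 : 1 ≤ m := Nat.ordCompl_pos p hn0
        have hmlt : m < n := by
          have hplt : 1 < ordProj[p] n := Nat.one_lt_pow (by omega) hp.one_lt
          calc m = 1 * m := (one_mul m).symm
            _ < ordProj[p] n * m := (Nat.mul_lt_mul_right hm1).mpr hplt
            _ = n := hmn
        have hmdvd : NatDvdU m u := by
          apply ih m hmlt hm1
          intro q hq
          have hfac : m.factorization q = if q = p then 0 else n.factorization q := by
            rw [hm, Nat.factorization_ordCompl n p, Finsupp.erase_apply]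
          rcases eq_or_ne q p with rfl | hqp
          · simp only [hfac, if_pos rfl, pow_zero]
            exact ⟨u, hu_pos, one_nsmul u⟩
          · rw [hfac, if_neg hqp]; exact h q hq
        have hcop : Nat.Coprime (ordProj[p] n) m :=
          Nat.Coprime.pow_left _ (Nat.coprime_ordCompl hp hn0)
        have := hD _ _ (Nat.ordProj_pos n p) hm1 hcop (h p hp) hmdvd
        rwa [hmn] at this
end

section
/- Let G be an unperforated partially ordered abelian group, let u ∈ G⁺ with u ≠ 0, and let N be a supernatural number with N ∣ u. Then there exists an injective additive group homomorphism α : Q(N) → G such that α(1) = u and α(q) ∈ G⁺ for every q ∈ Q(N) with q ≥ 0. -/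
private theorem add_den_dvd_lcm (a b : ℚ) : (a + b).den ∣ Nat.lcm a.den b.den := by
  obtain ⟨ca, hca⟩ := Nat.dvd_lcm_left a.den b.den
  obtain ⟨cb, hcb⟩ := Nat.dvd_lcm_right a.den b.den
  set l := Nat.lcm a.den b.den with hl
  have hl0 : l ≠ 0 := Nat.lcm_ne_zero a.den_nz b.den_nz
  have hl0' : ((l : ℤ) : ℚ) ≠ 0 := by exact_mod_cast hl0
  have h1 : (l : ℚ) = (a.den : ℚ) * ca := by exact_mod_cast hca
  have h2 : (l : ℚ) = (b.den : ℚ) * cb := by exact_mod_cast hcb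
  have key : a + b = ((a.num * ca + b.num * cb : ℤ) : ℚ) / ((l : ℤ) : ℚ) := by
    rw [eq_div_iff hl0']
    push_cast
    have e1 : a * (l : ℚ) = (a.num : ℚ) * ca := by
      rw [h1, ← mul_assoc, Rat.mul_den_eq_num]
    have e2 : b * (l : ℚ) = (b.num : ℚ) * cb := by
      rw [h2, ← mul_assoc, Rat.mul_den_eq_num]
    calc (a + b) * (l : ℚ) = a * (l : ℚ) + b * (l : ℚ) := by ring
    _ = (a.num : ℚ) * ca + (b.num : ℚ) * cb := by rw [e1, e2]
  have hdvd := Rat.den_dvd (a.num * ca + b.num * cb) (l : ℤ)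
  rw [Rat.divInt_eq_div, ← key] at hdvd
  exact_mod_cast hdvd

/-- The additive subgroup `Q(N)` of `ℚ` associated to a supernatural number `N`:
all rationals whose reduced denominator `d` satisfies `v_p(d) ≤ N(p)` for every
prime `p`. -/
def Qsn (N : Supernatural) : AddSubgroup ℚ where
  carrier := {q : ℚ | ∀ p : Nat.Primes, ((q.den.factorization (p : ℕ) : ℕ) : ℕ∞) ≤ N p}
  zero_mem' := by
    intro p
    simp
  add_mem' := by
    intro a b ha hb p
    have hd : (a + b).den ∣ Nat.lcm a.den b.den := add_den_dvd_lcm a b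
    have hfa := (Nat.factorization_le_iff_dvd (a + b).den_nz
      (Nat.lcm_ne_zero a.den_nz b.den_nz)).mpr hd
    have hkey : (a + b).den.factorization (p : ℕ) ≤
        max (a.den.factorization (p : ℕ)) (b.den.factorization (p : ℕ)) := by
      have h1 := Finsupp.le_def.mp hfa (p : ℕ)
      rw [Nat.factorization_lcm a.den_nz b.den_nz] at h1
      simpa [Finsupp.sup_apply] using h1
    rcases max_cases (a.den.factorization (p : ℕ)) (b.den.factorization (p : ℕ)) with
      ⟨hm, _⟩ | ⟨hm, _⟩
    · exact le_trans (by exact_mod_cast hkey.trans_eq hm) (ha p)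
    · exact le_trans (by exact_mod_cast hkey.trans_eq hm) (hb p)
  neg_mem' := by
    intro q hq p
    simpa using hq p

theorem one_mem_Qsn (N : Supernatural) : (1 : ℚ) ∈ Qsn N := by
  intro p
  simp [Qsn]

/-- Let `G` be an unperforated partially ordered abelian group, `u ∈ G⁺`
nonzero, and `N` a supernatural number with `N ∣ u`. Then there is an injective
additive group homomorphism `α : Q(N) → G` with `α(1) = u` mapping nonnegative
elements of `Q(N)` to `G⁺`. -/
theorem exists_unital_embedding_of_Qsn
    {G : Type*} [AddCommGroup G] [PartialOrder G] [IsOrderedAddMonoid G]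
    (hunp : ∀ (n : ℕ) (x : G), 1 ≤ n → 0 ≤ n • x → 0 ≤ x)
    (u : G) (hu_pos : 0 ≤ u) (hu_ne : u ≠ 0)
    (N : Supernatural) (hNu : SnDvdU N u) :
    ∃ α : Qsn N →+ G, Function.Injective α ∧
      α ⟨1, one_mem_Qsn N⟩ = u ∧
      ∀ q : Qsn N, 0 ≤ (q : ℚ) → 0 ≤ α q := by
  classical
  -- uniqueness of division
  have huniq : ∀ (n : ℕ), 1 ≤ n → ∀ x y : G, n • x = n • y → x = y := by
    intro n hn x y h
    have h1 : (0 : G) ≤ n • (x - y) := by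
      rw [smul_sub, h, sub_self]
    have h2 : (0 : G) ≤ n • (y - x) := by
      rw [smul_sub, h, sub_self]
    have ha := hunp n _ hn h1
    have hb := hunp n _ hn h2
    exact le_antisymm (sub_nonneg.mp hb) (sub_nonneg.mp ha)
  -- choose the division witnesses
  have hex : ∀ q : Qsn N, ∃ x : G, 0 ≤ x ∧ (q : ℚ).den • x = u := by
    intro q
    exact hNu (q : ℚ).den (q : ℚ).pos q.2
  choose X hX0 hXu using hex
  -- numerator over a common denominator
  have hnum : ∀ (q : ℚ) (l : ℕ), q.den ∣ l →
      ((q.num * ((l / q.den : ℕ) : ℤ) : ℤ) : ℚ) = q * l := by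
    intro q l hdvd
    have h1 : ((l / q.den : ℕ) : ℚ) * (q.den : ℚ) = (l : ℚ) := by
      exact_mod_cast Nat.div_mul_cancel hdvd
    push_cast
    calc (q.num : ℚ) * ((l / q.den : ℕ) : ℚ)
        = (q * q.den) * ((l / q.den : ℕ) : ℚ) := by rw [Rat.mul_den_eq_num]
      _ = q * (((l / q.den : ℕ) : ℚ) * q.den) := by ring
      _ = q * l := by rw [h1]
  -- key compatibility lemma
  have hkey : ∀ (q : Qsn N) (l : ℕ) (y : G), (q : ℚ).den ∣ l → l • y = u →
      (q : ℚ).num • X q = ((q : ℚ).num * ((l / (q : ℚ).den : ℕ) : ℤ)) • y := by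
    intro q l y hdvd hly
    set c := l / (q : ℚ).den with hc
    have hcl : (q : ℚ).den * c = l := Nat.mul_div_cancel' hdvd
    have h1 : (q : ℚ).den • (c • y) = u := by
      rw [smul_smul, hcl, hly]
    have h2 : c • y = X q :=
      huniq (q : ℚ).den (q : ℚ).pos _ _ (h1.trans (hXu q).symm)
    rw [← h2, mul_smul, natCast_zsmul]
  -- the homomorphism
  refine ⟨{ toFun := fun q => (q : ℚ).num • X q
            map_zero' := by simp
            map_add' := ?_ }, ?_, ?_, ?_⟩
  · intro a b
    set l := Nat.lcm (a : ℚ).den (b : ℚ).den with hl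
    have hl1 : 1 ≤ l := Nat.one_le_iff_ne_zero.mpr (Nat.lcm_ne_zero (a : ℚ).den_nz (b : ℚ).den_nz)
    have hlN : NatDvdSn l N := by
      intro p
      have hfl : l.factorization (p : ℕ) =
          max ((a : ℚ).den.factorization (p : ℕ)) ((b : ℚ).den.factorization (p : ℕ)) := by
        rw [hl, Nat.factorization_lcm (a : ℚ).den_nz (b : ℚ).den_nz]
        simp [Finsupp.sup_apply]
      rw [hfl]
      rcases max_cases ((a : ℚ).den.factorization (p : ℕ)) ((b : ℚ).den.factorization (p : ℕ)) with
        ⟨hm, _⟩ | ⟨hm, _⟩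
      · rw [hm]; exact a.2 p
      · rw [hm]; exact b.2 p
    obtain ⟨y, hy0, hyu⟩ := hNu l hl1 hlN
    have hab : ((a + b : Qsn N) : ℚ) = (a : ℚ) + (b : ℚ) := rfl
    have hda : (a : ℚ).den ∣ l := Nat.dvd_lcm_left _ _
    have hdb : (b : ℚ).den ∣ l := Nat.dvd_lcm_right _ _
    have hdab : ((a : ℚ) + (b : ℚ)).den ∣ l := add_den_dvd_lcm _ _
    have e1 := hkey a l y hda hyu
    have e2 := hkey b l y hdb hyu
    have e3 := hkey (a + b) l y (by rw [hab]; exact hdab) hyu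
    simp only [hab] at e3
    show ((a + b : Qsn N) : ℚ).num • X (a + b) = (a : ℚ).num • X a + (b : ℚ).num • X b
    rw [hab, e1, e2, e3, ← add_smul]
    congr 1
    have : ((((a : ℚ) + (b : ℚ)).num * ((l / ((a : ℚ) + (b : ℚ)).den : ℕ) : ℤ) : ℤ) : ℚ) =
        (((a : ℚ).num * ((l / (a : ℚ).den : ℕ) : ℤ) +
          (b : ℚ).num * ((l / (b : ℚ).den : ℕ) : ℤ) : ℤ) : ℚ) := by
      rw [hnum ((a : ℚ) + (b : ℚ)) l hdab, Int.cast_add, hnum (a : ℚ) l hda,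
        hnum (b : ℚ) l hdb]
      ring
    exact_mod_cast this
  · -- injectivity
    rw [injective_iff_map_eq_zero]
    intro q hq
    simp only [AddMonoidHom.coe_mk, ZeroHom.coe_mk] at hq
    by_contra hq0
    have hnum0 : (q : ℚ).num ≠ 0 := by
      intro h
      apply hq0
      have : (q : ℚ) = 0 := Rat.num_eq_zero.mp h
      exact Subtype.ext this
    set n := (q : ℚ).num.natAbs with hn
    have hn1 : 1 ≤ n := Nat.one_le_iff_ne_zero.mpr (Int.natAbs_ne_zero.mpr hnum0)
    have hcases : ((n : ℤ)) = (q : ℚ).num ∨ ((n : ℤ)) = -(q : ℚ).num := by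
      rcases Int.natAbs_eq (q : ℚ).num with h | h
      · left; rw [hn]; omega
      · right; rw [hn]; omega
    have hnsmul : n • X q = 0 := by
      rw [← natCast_zsmul]
      rcases hcases with h | h
      · rw [h, hq]
      · rw [h, neg_zsmul, hq, neg_zero]
    have hX0' : X q = 0 := by
      have h1 : (0 : G) ≤ n • (-(X q)) := by rw [smul_neg, hnsmul, neg_zero]
      have h2 := hunp n _ hn1 h1
      exact le_antisymm (neg_nonneg.mp h2) (hX0 q)
    have := hXu q
    rw [hX0', smul_zero] at this
    exact hu_ne this.symm
  · -- α(1) = u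
    have h := hXu ⟨1, one_mem_Qsn N⟩
    simp only [AddMonoidHom.coe_mk, ZeroHom.coe_mk]
    have hden : ((⟨1, one_mem_Qsn N⟩ : Qsn N) : ℚ).den = 1 := rfl
    have hnum1 : ((⟨1, one_mem_Qsn N⟩ : Qsn N) : ℚ).num = 1 := rfl
    rw [hden, one_smul] at h
    rw [hnum1, one_smul, h]
  · -- positivity
    intro q hq
    simp only [AddMonoidHom.coe_mk, ZeroHom.coe_mk]
    exact zsmul_nonneg (hX0 q) (Rat.num_nonneg.mpr hq)
end

section
/- Let G be an unperforated partially ordered abelian group, let g ∈ G⁺, and let m, n ≥ 1 be coprime natural numbers such that there exists x ∈ G⁺ with m•x = n•g. Then there exists y ∈ G⁺ with m•y = g. -/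
/-- Corollary 4.2: Let `G` be an unperforated partially ordered abelian
group, `g ∈ G⁺`, and `m, n ≥ 1` coprime natural numbers such that `m • x = n • g` for
some `x ∈ G⁺`. Then there exists `y ∈ G⁺` with `m • y = g`. -/
theorem exists_pos_div_of_coprime_smul_eq
    {G : Type*} [AddCommGroup G] [PartialOrder G] [IsOrderedAddMonoid G]
    (hunp : ∀ (k : ℕ) (a : G), 1 ≤ k → 0 ≤ k • a → 0 ≤ a)
    (g : G) (hg : 0 ≤ g)
    (m n : ℕ) (hm : 1 ≤ m) (hn : 1 ≤ n) (hmn : Nat.Coprime m n)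
    (hx : ∃ x : G, 0 ≤ x ∧ m • x = n • g) :
    ∃ y : G, 0 ≤ y ∧ m • y = g := by
  obtain ⟨x, hx0, hxm⟩ := hx
  set a : ℤ := Nat.gcdA m n
  set b : ℤ := Nat.gcdB m n
  have hbez : (m : ℤ) * a + (n : ℤ) * b = 1 := by
    have := Nat.gcd_eq_gcd_ab m n
    rw [hmn.gcd_eq_one] at this
    exact_mod_cast this.symm
  refine ⟨a • g + b • x, ?_, ?_⟩
  · refine hunp m _ hm ?_
    have key : (m : ℤ) • (a • g + b • x) = g := by
      have hx' : (m : ℤ) • x = (n : ℤ) • g := by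
        simpa [natCast_zsmul] using hxm
      rw [smul_add, smul_smul, smul_smul, mul_comm (m : ℤ) b, mul_smul b (m : ℤ) x,
        hx', smul_smul]
      rw [← add_smul]
      have : (m : ℤ) * a + b * (n : ℤ) = 1 := by linarith
      rw [this, one_smul]
    have : m • (a • g + b • x) = g := by
      rw [← natCast_zsmul]; exact key
    rw [this]; exact hg
  · have hx' : (m : ℤ) • x = (n : ℤ) • g := by
      simpa [natCast_zsmul] using hxm
    rw [← natCast_zsmul, smul_add, smul_smul, smul_smul, mul_comm (m : ℤ) b,
      mul_smul b (m : ℤ) x, hx', smul_smul, ← add_smul]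
    have : (m : ℤ) * a + b * (n : ℤ) = 1 := by linarith
    rw [this, one_smul]
end

section
/- Let α and β be distinct irrational real numbers, and let G and H be additive subgroups of ℚ with 1 ∈ G. If there exists a bijective additive group homomorphism θ : G + αH → G + βH with θ(1) = 1 such that for all x, y ∈ G + αH, x ≤ y if and only if θ(x) ≤ θ(y), then G + αH = G + βH as subsets of ℝ. -/
/-!
An order-preserving additive map `f` on a subgroup of `ℝ` containing `1` with `f 1 = 1` fixes
every rational multiple of `1`, hence sends `d • x` and `m • 1` to `d • f x` and `m`: so `x` and
`f x` lie on the same side of every rational `m / d`, and by density of `ℚ` they are equal.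
Thus `θ` is the inclusion `G + αH ⊆ G + βH`, and its surjectivity gives equality.
-/

/-- The additive subgroup `G + αH` of `ℝ`, for additive subgroups `G, H` of `ℚ` and a
real number `α`. -/
def mixSubgroup (G H : AddSubgroup ℚ) (α : ℝ) : AddSubgroup ℝ where
  carrier := {x : ℝ | ∃ g ∈ G, ∃ h ∈ H, x = (g : ℝ) + α * (h : ℝ)}
  zero_mem' := ⟨0, G.zero_mem, 0, H.zero_mem, by simp⟩
  add_mem' := by
    rintro x y ⟨g1, hg1, h1, hh1, rfl⟩ ⟨g2, hg2, h2, hh2, rfl⟩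
    exact ⟨g1 + g2, G.add_mem hg1 hg2, h1 + h2, H.add_mem hh1 hh2, by push_cast; ring⟩
  neg_mem' := by
    rintro x ⟨g, hg, h, hh, rfl⟩
    exact ⟨-g, G.neg_mem hg, -h, H.neg_mem hh, by push_cast; ring⟩

theorem one_mem_mixSubgroup (G H : AddSubgroup ℚ) (α : ℝ) (h1G : (1 : ℚ) ∈ G) :
    (1 : ℝ) ∈ mixSubgroup G H α :=
  ⟨1, h1G, 0, H.zero_mem, by simp⟩

namespace AddSubgroup

variable {A : AddSubgroup ℝ} (one_mem : (1 : ℝ) ∈ A) (f : A →+ ℝ) (hf : Monotone f)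
  (hf1 : f ⟨1, one_mem⟩ = 1)
include hf hf1

theorem ratCast_le_apply_of_ratCast_le {x : A} {q : ℚ} (hq : (q : ℝ) ≤ x) :
    (q : ℝ) ≤ f x := by
  have hden : (0 : ℝ) < q.den := by positivity
  have hcast : (q : ℝ) = q.num / q.den := Rat.cast_def q
  have hle : q.num • (⟨1, one_mem⟩ : A) ≤ (q.den : ℤ) • x := by
    rw [← Subtype.coe_le_coe, coe_zsmul, coe_zsmul]
    simpa [hcast, div_le_iff₀ hden, mul_comm] using hq
  have hfle := hf hle
  rw [map_zsmul, map_zsmul, hf1] at hfle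
  simpa [hcast, div_le_iff₀ hden, mul_comm] using hfle

theorem apply_le_ratCast_of_le_ratCast {x : A} {q : ℚ} (hq : (x : ℝ) ≤ q) :
    f x ≤ q := by
  have hneg : ((-q : ℚ) : ℝ) ≤ (-x : A) := by push_cast; exact neg_le_neg hq
  simpa using ratCast_le_apply_of_ratCast_le one_mem f hf hf1 hneg

theorem apply_eq_coe_of_monotone (x : A) : f x = x := by
  by_contra hne
  rcases lt_or_gt_of_ne hne with hlt | hgt
  · obtain ⟨q, hfq, hqx⟩ := exists_rat_btwn hlt
    exact (ratCast_le_apply_of_ratCast_le one_mem f hf hf1 hqx.le).not_gt hfq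
  · obtain ⟨q, hxq, hqf⟩ := exists_rat_btwn hgt
    exact (apply_le_ratCast_of_le_ratCast one_mem f hf hf1 hxq.le).not_gt hqf

end AddSubgroup

theorem Set.eq_of_surjective_of_coe_apply {α : Type*} {s t : Set α} (θ : s → t)
    (hθ : Function.Surjective θ) (h : ∀ x, (θ x : α) = x) : s = t := by
  ext y
  constructor
  · intro hy
    simpa only [h] using (θ ⟨y, hy⟩).2
  · intro hy
    obtain ⟨x, hx⟩ := hθ ⟨y, hy⟩
    have hxy : (x : α) = y := by rw [← h x, hx]
    exact hxy ▸ x.2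

theorem mixSubgroup_eq_of_orderIso_general
    (α β : ℝ)
    (G H : AddSubgroup ℚ) (h1G : (1 : ℚ) ∈ G)
    (θ : mixSubgroup G H α →+ mixSubgroup G H β)
    (hbij : Function.Bijective θ)
    (hθ1 : θ ⟨1, one_mem_mixSubgroup G H α h1G⟩ = ⟨1, one_mem_mixSubgroup G H β h1G⟩)
    (horder : ∀ x y : mixSubgroup G H α, (x : ℝ) ≤ (y : ℝ) ↔ (θ x : ℝ) ≤ (θ y : ℝ)) :
    (mixSubgroup G H α : Set ℝ) = (mixSubgroup G H β : Set ℝ) := by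
  have hmono : Monotone ((mixSubgroup G H β).subtype.comp θ) :=
    fun x y hxy => (horder x y).mp hxy
  have hθ1' : (mixSubgroup G H β).subtype.comp θ ⟨1, one_mem_mixSubgroup G H α h1G⟩ = 1 := by
    simp [hθ1]
  exact Set.eq_of_surjective_of_coe_apply θ hbij.2
    (AddSubgroup.apply_eq_coe_of_monotone _ _ hmono hθ1')

/-- Lemma 4.4: Let `α ≠ β` be irrational numbers, and `G, H` additive
subgroups of `ℚ` with `1 ∈ G`. If there is a bijective additive group homomorphism
`θ : G + αH → G + βH` with `θ(1) = 1` such that `x ≤ y ↔ θ(x) ≤ θ(y)` for all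
`x, y ∈ G + αH`, then `G + αH = G + βH` (as subsets of `ℝ`). -/
theorem mixSubgroup_eq_of_orderIso
    (α β : ℝ) (hα : Irrational α) (hβ : Irrational β) (hαβ : α ≠ β)
    (G H : AddSubgroup ℚ) (h1G : (1 : ℚ) ∈ G)
    (θ : mixSubgroup G H α →+ mixSubgroup G H β)
    (hbij : Function.Bijective θ)
    (hθ1 : θ ⟨1, one_mem_mixSubgroup G H α h1G⟩ = ⟨1, one_mem_mixSubgroup G H β h1G⟩)
    (horder : ∀ x y : mixSubgroup G H α, (x : ℝ) ≤ (y : ℝ) ↔ (θ x : ℝ) ≤ (θ y : ℝ)) :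
    (mixSubgroup G H α : Set ℝ) = (mixSubgroup G H β : Set ℝ) :=
  mixSubgroup_eq_of_orderIso_general α β G H h1G θ hbij hθ1 horder
end

section
/- Let α be an irrational real number and H an additive subgroup of ℚ with 1 ∈ H. Let k ∈ H with k ≠ 0 and z ∈ ℤ be such that v := k + α·z > 0. Then the rational subgroup ℚ(H + αℤ, v) equals the set {h + α·w : h ∈ H, w ∈ ℤ, k·w = h·z} (i.e., the set of all h + α·(hz/k) with h ∈ H such that hz/k ∈ ℤ). -/
/-! Since `1` and `α` are linearly independent over `ℚ`, an equation
`m (h + α w) = q (k + α z)` splits into `m h = q k` and `m w = q z`; eliminating `m` and `q`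
leaves `k w = h z`. Conversely, if `k w = h z`, then `h + α w = r (k + α z)` with `r = h / k`,
and clearing the denominator of `r` gives the required `m` and `q`. -/

/-- The additive subgroup `H + αℤ` of `ℝ`, for an additive subgroup `H` of `ℚ` and a
real number `α`. -/
def mixZSubgroup (H : AddSubgroup ℚ) (α : ℝ) : AddSubgroup ℝ where
  carrier := {x : ℝ | ∃ h ∈ H, ∃ w : ℤ, x = (h : ℝ) + α * (w : ℝ)}
  zero_mem' := ⟨0, H.zero_mem, 0, by simp⟩
  add_mem' := by
    rintro x y ⟨h1, hh1, w1, rfl⟩ ⟨h2, hh2, w2, rfl⟩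
    exact ⟨h1 + h2, H.add_mem hh1 hh2, w1 + w2, by push_cast; ring⟩
  neg_mem' := by
    rintro x ⟨h, hh, w, rfl⟩
    exact ⟨-h, H.neg_mem hh, -w, by push_cast; ring⟩

namespace Irrational

variable {α : ℝ}

theorem eq_and_eq_of_ratCast_add_mul_eq (hα : Irrational α) {a b c d : ℚ}
    (h : (a : ℝ) + α * b = c + α * d) : a = c ∧ b = d := by
  have hbd : b = d := by
    by_contra hne
    apply (hα.mul_ratCast (sub_ne_zero.mpr hne)).ne_rat (c - a)
    push_cast
    linear_combination h
  subst hbd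
  exact ⟨by exact_mod_cast add_right_cancel h, rfl⟩

theorem exists_nat_mul_eq_int_mul_iff (hα : Irrational α) {h w k z : ℚ} (hk : k ≠ 0) :
    (∃ m : ℕ, 1 ≤ m ∧ ∃ q : ℤ, (m : ℝ) * (h + α * w) = q * (k + α * z)) ↔ k * w = h * z := by
  constructor
  · rintro ⟨m, hm, q, heq⟩
    obtain ⟨hmh, hmw⟩ : (m * h : ℚ) = q * k ∧ (m * w : ℚ) = q * z :=
      hα.eq_and_eq_of_ratCast_add_mul_eq (by push_cast; linear_combination heq)
    have hm0 : (m : ℚ) ≠ 0 := by exact_mod_cast (Nat.one_le_iff_ne_zero.mp hm)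
    apply mul_left_cancel₀ hm0
    linear_combination k * hmw - z * hmh
  · intro hkw
    set r := h / k
    have hh : h = r * k := (div_mul_cancel₀ h hk).symm
    have hw : w = r * z := by
      rw [div_mul_eq_mul_div, eq_div_iff hk]
      linear_combination hkw
    have hnum : (r.num : ℝ) = r.den * r := by exact_mod_cast r.den_mul_eq_num.symm
    refine ⟨r.den, r.pos, r.num, ?_⟩
    rw [hh, hw, hnum]
    push_cast
    ring

end Irrational

theorem rationalSubgroup_of_mixZ_general
    (α : ℝ) (hα : Irrational α)
    (H : AddSubgroup ℚ)
    (k : ℚ) (hk : k ≠ 0) (z : ℤ)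
    (v : ℝ) (hv : v = (k : ℝ) + α * (z : ℝ)) :
    {x : ℝ | x ∈ mixZSubgroup H α ∧ ∃ m : ℕ, 1 ≤ m ∧ ∃ q : ℤ, (m : ℝ) * x = (q : ℝ) * v}
      = {x : ℝ | ∃ h ∈ H, ∃ w : ℤ, k * (w : ℚ) = h * (z : ℚ) ∧
          x = (h : ℝ) + α * (w : ℝ)} := by
  subst hv
  ext x
  constructor
  · rintro ⟨⟨h, hh, w, rfl⟩, hrat⟩
    refine ⟨h, hh, w, (hα.exists_nat_mul_eq_int_mul_iff hk).mp ?_, rfl⟩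
    exact_mod_cast hrat
  · rintro ⟨h, hh, w, hkw, rfl⟩
    refine ⟨⟨h, hh, w, rfl⟩, ?_⟩
    exact_mod_cast (hα.exists_nat_mul_eq_int_mul_iff hk).mpr hkw

/-- Lemma 4.5: Let `α` be irrational, `H ≤ ℚ` with `1 ∈ H`, `k ∈ H`
nonzero, `z ∈ ℤ`, and `v = k + αz > 0`. Then the rational subgroup `ℚ(H + αℤ, v)`
(elements `x` of `H + αℤ` with `m • x = q • v` for some `m ≥ 1`, `q ∈ ℤ`) equals
`{h + α(hz/k) : h ∈ H, hz/k ∈ ℤ}`. -/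
theorem rationalSubgroup_of_mixZ
    (α : ℝ) (hα : Irrational α)
    (H : AddSubgroup ℚ) (h1H : (1 : ℚ) ∈ H)
    (k : ℚ) (hkH : k ∈ H) (hk : k ≠ 0) (z : ℤ)
    (v : ℝ) (hv : v = (k : ℝ) + α * (z : ℝ)) (hvpos : 0 < v) :
    {x : ℝ | x ∈ mixZSubgroup H α ∧ ∃ m : ℕ, 1 ≤ m ∧ ∃ q : ℤ, (m : ℝ) * x = (q : ℝ) * v}
      = {x : ℝ | ∃ h ∈ H, ∃ w : ℤ, k * (w : ℚ) = h * (z : ℚ) ∧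
          x = (h : ℝ) + α * (w : ℝ)} :=
  rationalSubgroup_of_mixZ_general α hα H k hk z v hv
end

section
/- Let α be an irrational real number and H an additive subgroup of ℚ with 1 ∈ H. Then ℚ(H + αℤ, 1) = H; that is, {x ∈ H + αℤ : there exist a natural number m ≥ 1 and an integer q with m·x = q} equals H (viewed as a subset of ℝ). -/
theorem Irrational.eq_zero_of_natCast_mul_ratCast_add_mul_intCast_eq_intCast {α : ℝ}
    (hα : Irrational α) {r : ℚ} {w : ℤ} {m : ℕ} (hm : m ≠ 0) {q : ℤ}
    (h : (m : ℝ) * (r + α * w) = q) : w = 0 := by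
  by_contra hw
  exact (((hα.mul_intCast hw).ratCast_add r).natCast_mul hm).ne_int q h

theorem ratCast_mem_mixZSubgroup {H : AddSubgroup ℚ} (α : ℝ) {r : ℚ} (hr : r ∈ H) :
    (r : ℝ) ∈ mixZSubgroup H α :=
  ⟨r, hr, 0, by simp⟩

theorem Rat.exists_natCast_mul_ratCast_eq_intCast (r : ℚ) :
    ∃ m : ℕ, 1 ≤ m ∧ ∃ q : ℤ, (m : ℝ) * r = q :=
  ⟨r.den, r.pos, r.num, by exact_mod_cast r.den_mul_eq_num⟩

theorem rationalSubgroup_of_mixZ_one_general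
    (α : ℝ) (hα : Irrational α)
    (H : AddSubgroup ℚ) :
    {x : ℝ | x ∈ mixZSubgroup H α ∧ ∃ m : ℕ, 1 ≤ m ∧ ∃ q : ℤ, (m : ℝ) * x = (q : ℝ)}
      = {x : ℝ | ∃ h ∈ H, x = (h : ℝ)} := by
  ext x
  constructor
  · rintro ⟨⟨h, hh, w, rfl⟩, m, hm, q, hq⟩
    obtain rfl : w = 0 :=
      hα.eq_zero_of_natCast_mul_ratCast_add_mul_intCast_eq_intCast (by omega) hq
    exact ⟨h, hh, by simp⟩
  · rintro ⟨h, hh, rfl⟩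
    exact ⟨ratCast_mem_mixZSubgroup α hh, h.exists_natCast_mul_ratCast_eq_intCast⟩

/-- Lemma 4.5, "in particular": Let `α` be irrational and `H ≤ ℚ` with
`1 ∈ H`. Then `ℚ(H + αℤ, 1) = H`: the set of `x ∈ H + αℤ` with `m • x = q • 1` for
some `m ≥ 1`, `q ∈ ℤ`, equals `H` (viewed inside `ℝ`). -/
theorem rationalSubgroup_of_mixZ_one
    (α : ℝ) (hα : Irrational α)
    (H : AddSubgroup ℚ) (h1H : (1 : ℚ) ∈ H) :
    {x : ℝ | x ∈ mixZSubgroup H α ∧ ∃ m : ℕ, 1 ≤ m ∧ ∃ q : ℤ, (m : ℝ) * x = (q : ℝ)}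
      = {x : ℝ | ∃ h ∈ H, x = (h : ℝ)} :=
  rationalSubgroup_of_mixZ_one_general α hα H
end
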